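/- Let (V; M0,...,M4; c) be a Higmanian matrix configuration with valencies ni = c(i,i,0), and fix i ∈ {3,4}. Suppose c(3,3,3) = c(3,3,4) and (as rational numbers) n2/(n1+1) − 2·ni/n_{7−i} = 1. Then the matrix A = M2 + Mi is the adjacency matrix of a divisible design graph with class matrix P = N0 = M0+M1 and parameters v = 1+n1+n2+n3+n4, k = n2+ni, λ1 = n2 + ni·(n1·ni − n_{7−i})/(n1·(n3+n4)), λ2 = n2 − n1 − 1 + ni^2/(n3+n4), m = 1 + (n2+n3+n4)/(1+n1), n = 1+n1; in particular λ1, λ2 and m are nonnegative integers and A^2 = k•I + λ1•(N0−I) + λ2•(J−N0). -/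

import Mathlib

open Matrix Finset

/-- A *Higmanian matrix configuration* on a nonempty finite set `V`:
five nonzero symmetric `{0,1}`-matrices `M 0, …, M 4` over `ℤ` summing to the all-ones
matrix, with `M 0 = I`, structure constants `c`, parabolic conditions for
`N0 = M0 + M1` and `N1 = M0 + M1 + M2`, standard ordering `n3 ≤ n4`, and triviality of
the radicals of `M 3` and `M 4`. -/
structure HigmanianConfig (V : Type*) [Fintype V] [DecidableEq V] : Type _ where
  nonempty : Nonempty V
  M : Fin 5 → Matrix V V ℤ
  c : Fin 5 → Fin 5 → Fin 5 → ℕ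
  M_ne_zero : ∀ i, M i ≠ 0
  M_symm : ∀ i, (M i)ᵀ = M i
  M_entries : ∀ i x y, M i x y = 0 ∨ M i x y = 1
  M_zero : M 0 = 1
  sum_M : M 0 + M 1 + M 2 + M 3 + M 4 = Matrix.of fun _ _ => 1
  mul_M : ∀ i j, M i * M j = ∑ k : Fin 5, (c i j k : ℤ) • M k
  N0_sq : (M 0 + M 1) * (M 0 + M 1) = ((1 + c 1 1 0 : ℕ) : ℤ) • (M 0 + M 1)
  N1_sq : (M 0 + M 1 + M 2) * (M 0 + M 1 + M 2)
      = ((1 + c 1 1 0 + c 2 2 0 : ℕ) : ℤ) • (M 0 + M 1 + M 2)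
  N1_ne_J : M 0 + M 1 + M 2 ≠ Matrix.of fun _ _ => 1
  n3_le_n4 : c 3 3 0 ≤ c 4 4 0
  radical : ∀ j ∈ ({3, 4} : Finset (Fin 5)), ∀ T : Finset (Fin 5),
    T.Nonempty → T ⊆ ({1, 2, 3, 4} : Finset (Fin 5)) →
    ¬ ((1 + ∑ t ∈ T, M t) * (1 + ∑ t ∈ T, M t)
          = (1 + ∑ t ∈ T, (c t t 0 : ℤ)) • (1 + ∑ t ∈ T, M t)
        ∧ (1 + ∑ t ∈ T, M t) * M j = (1 + ∑ t ∈ T, (c t t 0 : ℤ)) • M j)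

/-- The valency `nᵢ = c i i 0` of the `i`-th basis matrix. -/
def HigmanianConfig.n {V : Type*} [Fintype V] [DecidableEq V]
    (X : HigmanianConfig V) (i : Fin 5) : ℕ := X.c i i 0

/-!
Write `N0 = M0 + M1` and `N1 = M0 + M1 + M2` for the two parabolics, with classes of sizes
`a = 1 + n1` and `b = a + n2`, and put `S = n3 + n4`; then `M2 = N1 - N0` and
`M3 + M4 = J - N1`. For `t ∈ {3,4}` and `E ∈ {N0, N1}` with class size `e`, the product `E Mt`
vanishes on the classes of `N1`, so `E Mt = δ Mt + d (J - N1)`. Multiplying by `E` and using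
`E² = e E` gives `δ d = 0 = δ (δ - e)`, and `δ = e` would put `E` into the radical of `Mt`;
hence `E Mt = d (J - N1)`, and row sums give `S d = e nt`. So every product of basis matrices is pinned down by the valencies,
except `Mt²`, whose `M3`- and `M4`-coefficients differ by `c(3,3,3) - c(3,3,4)` for both `t`.
When they agree, multiplying `Mt² = nt I + α M1 + β M2 + γ (J - N1)` by `N0` determines
`α, β, γ`, and `(M2 + Mt)²` lies in the span of `I, N0, J` exactly when
`n2 / a - 2 nt / ns = 1`, `s` being the other index in `{3,4}`.
That `a` divides `|V|` is the integrality of the trace of the idempotent `N0 / a`.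
-/

theorem Matrix.dvd_trace_of_mul_self_eq_smul {n : Type*} [Fintype n] [DecidableEq n]
    {A : Matrix n n ℤ} {a : ℤ} (ha : a ≠ 0) (h : A * A = a • A) : a ∣ A.trace := by
  have ha' : (a : ℚ) ≠ 0 := by exact_mod_cast ha
  set E : Matrix n n ℚ := (a : ℚ)⁻¹ • A.map (Int.castRingHom ℚ)
  have hE : IsIdempotentElem E.toLin' := by
    have hA : A.map (Int.castRingHom ℚ) * A.map (Int.castRingHom ℚ)
        = (a : ℚ) • A.map (Int.castRingHom ℚ) := by
      rw [← Matrix.map_mul, h]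
      ext
      simp only [Matrix.map_apply, Matrix.smul_apply, smul_eq_mul, map_mul, eq_intCast]
    refine IsIdempotentElem.map (f := Matrix.toLinAlgEquiv') ?_
    rw [IsIdempotentElem, smul_mul_smul_comm, hA, smul_smul, inv_mul_cancel_right₀ ha']
  have htr := (LinearMap.IsIdempotentElem.isProj_range _ hE).trace
  rw [Matrix.trace_toLin'_eq] at htr
  refine ⟨Module.finrank ℚ (LinearMap.range E.toLin'), ?_⟩
  have : (A.trace : ℚ) = a * E.trace := by
    rw [Matrix.trace_smul, smul_eq_mul, ← mul_assoc, mul_inv_cancel₀ ha', one_mul]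
    simp [Matrix.trace]
  rw [htr] at this
  exact_mod_cast this

theorem Matrix.apply_eq_one_of_mul_self_eq_smul {n : Type*} [Fintype n] {A : Matrix n n ℤ}
    {a : ℤ} (h01 : ∀ x y, A x y = 0 ∨ A x y = 1) (h : A * A = a • A) {x y z : n}
    (hxy : A x y = 1) (hyz : A y z = 1) : A x z = 1 := by
  have hnonneg : ∀ u v, 0 ≤ A u v := fun u v => by rcases h01 u v with h | h <;> simp [h]
  have hle : A x y * A y z ≤ (A * A) x z :=
    Finset.single_le_sum (f := fun w => A x w * A w z)
      (fun w _ => mul_nonneg (hnonneg x w) (hnonneg w z)) (Finset.mem_univ y)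
  rw [h, smul_apply, smul_eq_mul, hxy, hyz] at hle
  rcases h01 x z with h0 | h1
  · rw [h0] at hle; simp at hle
  · exact h1

namespace HigmanianConfig

variable {V : Type*} [Fintype V] [DecidableEq V] (X : HigmanianConfig V)

local notation "J" => (Matrix.of fun (_ : V) (_ : V) => (1 : ℤ))

lemma M_apply_nonneg (k : Fin 5) (x y : V) : 0 ≤ X.M k x y := by
  rcases X.M_entries k x y with h | h <;> simp [h]

lemma sum_M_apply (x y : V) : ∑ k, X.M k x y = 1 := by
  simpa [Fin.sum_univ_five] using congrFun (congrFun X.sum_M x) y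

lemma M_apply_eq_ite {k : Fin 5} {x y : V} (h : X.M k x y = 1) (l : Fin 5) :
    X.M l x y = if l = k then 1 else 0 := by
  split_ifs with hl
  · rw [hl, h]
  · have hsum := X.sum_M_apply x y
    rw [← Finset.add_sum_erase _ _ (Finset.mem_univ k), h, add_eq_left,
      Finset.sum_eq_zero_iff_of_nonneg (fun m _ => X.M_apply_nonneg m x y)] at hsum
    exact hsum l (Finset.mem_erase.2 ⟨hl, Finset.mem_univ l⟩)

lemma exists_M_apply_eq_one (k : Fin 5) : ∃ x y, X.M k x y = 1 := by
  by_contra! h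
  exact X.M_ne_zero k (Matrix.ext fun x y => (X.M_entries k x y).resolve_right (h x y))

lemma sum_smul_M_apply {k : Fin 5} {x y : V} (h : X.M k x y = 1) (f : Fin 5 → ℤ) :
    (∑ l, f l • X.M l) x y = f k := by
  simp only [Matrix.sum_apply, Matrix.smul_apply, smul_eq_mul, X.M_apply_eq_ite h, mul_ite,
    mul_one, mul_zero, Finset.sum_ite_eq', Finset.mem_univ, if_true]

lemma mul_M_apply {k : Fin 5} {x y : V} (h : X.M k x y = 1) (i j : Fin 5) :
    (X.M i * X.M j) x y = X.c i j k := by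
  rw [X.mul_M, X.sum_smul_M_apply h]

lemma M_mul_comm (i j : Fin 5) : X.M i * X.M j = X.M j * X.M i := by
  have hsymm : (X.M i * X.M j)ᵀ = X.M i * X.M j := by
    rw [X.mul_M, transpose_sum]
    simp only [transpose_smul, X.M_symm]
  rw [← hsymm, transpose_mul, X.M_symm, X.M_symm]

lemma M_apply_comm (k : Fin 5) (x y : V) : X.M k y x = X.M k x y := by
  simpa using congrFun (congrFun (X.M_symm k) x) y

lemma sum_M_row (k : Fin 5) (x : V) : ∑ y, X.M k x y = X.n k := by
  have hdiag := X.mul_M_apply (k := 0) (x := x) (y := x) (by simp [X.M_zero]) k k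
  rw [mul_apply] at hdiag
  rw [HigmanianConfig.n, ← hdiag]
  refine Finset.sum_congr rfl fun y _ => ?_
  rw [X.M_apply_comm k x y]
  rcases X.M_entries k x y with h | h <;> rw [h] <;> norm_num

lemma M_mul_J (k : Fin 5) : X.M k * J = (X.n k : ℤ) • J := by
  ext x z
  simp [mul_apply, X.sum_M_row]

lemma J_mul_M (k : Fin 5) : J * X.M k = (X.n k : ℤ) • J := by
  ext x z
  rw [mul_apply, Matrix.smul_apply, of_apply, smul_eq_mul, mul_one, ← X.sum_M_row k z]
  exact Finset.sum_congr rfl fun y _ => by rw [of_apply, one_mul, X.M_apply_comm]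

lemma n_zero : X.n 0 = 1 := by
  obtain ⟨x⟩ := X.nonempty
  have := X.sum_M_row 0 x
  simp [X.M_zero, one_apply] at this
  exact_mod_cast this.symm

lemma n_pos (k : Fin 5) : 0 < X.n k := by
  obtain ⟨x, y, h⟩ := X.exists_M_apply_eq_one k
  have hle : X.M k x y ≤ ∑ y, X.M k x y :=
    Finset.single_le_sum (fun y _ => X.M_apply_nonneg k x y) (Finset.mem_univ y)
  rw [h, X.sum_M_row] at hle
  exact_mod_cast hle

lemma n_three_add_n_four_pos : (0 : ℤ) < X.n 3 + X.n 4 := by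
  have := X.n_pos 3; have := X.n_pos 4; positivity

lemma card_eq : Fintype.card V = 1 + X.n 1 + X.n 2 + X.n 3 + X.n 4 := by
  obtain ⟨x⟩ := X.nonempty
  have h : ∑ y, ∑ k, X.M k x y = ∑ k, ∑ y, X.M k x y := Finset.sum_comm
  simp only [X.sum_M_apply, X.sum_M_row, Fin.sum_univ_five, X.n_zero] at h
  simp at h
  exact_mod_cast h

def N0 : Matrix V V ℤ := X.M 0 + X.M 1

def N1 : Matrix V V ℤ := X.M 0 + X.M 1 + X.M 2

lemma N0_eq_sum : X.N0 = ∑ k ∈ {0, 1}, X.M k := by simp [N0]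

lemma N1_eq_sum : X.N1 = ∑ k ∈ {0, 1, 2}, X.M k := by simp [N1, add_assoc]

lemma exists_M_apply_eq_one_at (x y : V) : ∃ k, X.M k x y = 1 := by
  by_contra! h
  have := X.sum_M_apply x y
  simp [Finset.sum_eq_zero fun k _ => (X.M_entries k x y).resolve_right (h k)] at this

lemma sum_M_apply_eq_zero_or_one (s : Finset (Fin 5)) (x y : V) :
    (∑ k ∈ s, X.M k) x y = 0 ∨ (∑ k ∈ s, X.M k) x y = 1 := by
  obtain ⟨k, hk⟩ := X.exists_M_apply_eq_one_at x y
  simp only [Matrix.sum_apply, X.M_apply_eq_ite hk, Finset.sum_ite_eq']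
  split_ifs <;> simp

lemma N0_transpose : X.N0ᵀ = X.N0 := by simp [N0, X.M_symm]

lemma N1_transpose : X.N1ᵀ = X.N1 := by simp [N1, X.M_symm]

lemma N0_mul_self : X.N0 * X.N0 = (1 + X.n 1 : ℤ) • X.N0 := by
  have h := X.N0_sq
  rw [Nat.cast_add, Nat.cast_one] at h
  exact h

lemma N1_mul_self : X.N1 * X.N1 = (1 + X.n 1 + X.n 2 : ℤ) • X.N1 := by
  have h := X.N1_sq
  rw [Nat.cast_add, Nat.cast_add, Nat.cast_one] at h
  exact h

lemma N0_mul_J : X.N0 * J = (1 + X.n 1 : ℤ) • J := by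
  simp [N0, add_mul, X.M_mul_J, X.n_zero, add_smul]

lemma N1_mul_J : X.N1 * J = (1 + X.n 1 + X.n 2 : ℤ) • J := by
  simp [N1, add_mul, X.M_mul_J, X.n_zero, add_smul]

lemma J_sub_N1 : J - X.N1 = X.M 3 + X.M 4 := by
  rw [← X.sum_M, N1]; abel

lemma J_sub_N1_mul_J : (J - X.N1) * J = (X.n 3 + X.n 4 : ℤ) • J := by
  rw [J_sub_N1, add_mul, X.M_mul_J, X.M_mul_J, add_smul]

lemma N1_apply_eq_of_N1_apply_eq_one {x y : V} (h : X.N1 x y = 1) (z : V) :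
    X.N1 y z = X.N1 x z := by
  have h01 : ∀ u v, X.N1 u v = 0 ∨ X.N1 u v = 1 := by
    rw [N1_eq_sum]; exact X.sum_M_apply_eq_zero_or_one _
  have htrans {u v w : V} : X.N1 u v = 1 → X.N1 v w = 1 → X.N1 u w = 1 :=
    apply_eq_one_of_mul_self_eq_smul h01 X.N1_mul_self
  have hyx : X.N1 y x = 1 := by rw [← X.N1_transpose, transpose_apply, h]
  rcases h01 y z with hyz | hyz
  · rcases h01 x z with hxz | hxz
    · rw [hyz, hxz]
    · rw [htrans hyx hxz] at hyz; exact absurd hyz one_ne_zero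
  · rw [hyz, htrans h hyz]

lemma N1_apply_eq_one_of_N0_apply_eq_one {x y : V} (h : X.N0 x y = 1) : X.N1 x y = 1 := by
  have h01 := X.sum_M_apply_eq_zero_or_one {0, 1, 2} x y
  rw [← N1_eq_sum] at h01
  have : X.N1 x y = X.N0 x y + X.M 2 x y := rfl
  have := X.M_apply_nonneg 2 x y
  omega

lemma M_apply_eq_zero_of_N1_apply_eq_one {t : Fin 5} (ht : t = 3 ∨ t = 4) {x y : V}
    (h : X.N1 x y = 1) : X.M t x y = 0 := by
  have hsum : X.N1 x y + X.M 3 x y + X.M 4 x y = 1 := by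
    simpa [N1, Fin.sum_univ_five] using X.sum_M_apply x y
  have := X.M_apply_nonneg 3 x y
  have := X.M_apply_nonneg 4 x y
  rcases ht with rfl | rfl <;> omega

lemma N0_mul_N1 : X.N0 * X.N1 = (1 + X.n 1 : ℤ) • X.N1 := by
  ext x z
  have hrow : ∑ y, X.N0 x y = 1 + X.n 1 := by
    simpa [mul_apply] using congrFun (congrFun X.N0_mul_J x) x
  calc (X.N0 * X.N1) x z = ∑ y, X.N0 x y * X.N1 x z := by
        rw [mul_apply]
        refine Finset.sum_congr rfl fun y _ => ?_
        rcases X.sum_M_apply_eq_zero_or_one {0, 1} x y with h | h <;> rw [← N0_eq_sum] at h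
        · rw [h, zero_mul, zero_mul]
        · rw [X.N1_apply_eq_of_N1_apply_eq_one (X.N1_apply_eq_one_of_N0_apply_eq_one h)]
    _ = ((1 + X.n 1 : ℤ) • X.N1) x z := by rw [← Finset.sum_mul, hrow]; rfl

lemma N1_mul_N0 : X.N1 * X.N0 = (1 + X.n 1 : ℤ) • X.N1 := by
  rw [← X.N0_transpose, ← X.N1_transpose, ← transpose_mul, N0_mul_N1, transpose_smul]

lemma N0_mul_M_ne {t : Fin 5} (ht : t = 3 ∨ t = 4) :
    X.N0 * X.M t ≠ (1 + X.n 1 : ℤ) • X.M t := fun h =>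
  X.radical t (by rcases ht with rfl | rfl <;> decide) {1} (by simp) (by decide)
    (by rw [Finset.sum_singleton, Finset.sum_singleton, ← X.M_zero]; exact ⟨X.N0_mul_self, h⟩)

lemma N1_mul_M_ne {t : Fin 5} (ht : t = 3 ∨ t = 4) :
    X.N1 * X.M t ≠ (1 + X.n 1 + X.n 2 : ℤ) • X.M t := fun h =>
  X.radical t (by rcases ht with rfl | rfl <;> decide) {1, 2} (by simp) (by decide)
    (by
      rw [Finset.sum_pair (by decide), Finset.sum_pair (by decide), ← X.M_zero, ← add_assoc,
        ← add_assoc]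
      exact ⟨X.N1_mul_self, h⟩)

lemma N1_apply_eq_one_of_M_apply_eq_one {j : Fin 5} (hj : j ≤ 2) {x y : V}
    (h : X.M j x y = 1) : X.N1 x y = 1 := by
  rw [N1, Matrix.add_apply, Matrix.add_apply, X.M_apply_eq_ite h, X.M_apply_eq_ite h,
    X.M_apply_eq_ite h]
  fin_cases j <;> simp_all

lemma J_sub_N1_apply_of_M_apply_eq_one {t : Fin 5} (ht : t = 3 ∨ t = 4) {x y : V}
    (h : X.M t x y = 1) : (J - X.N1) x y = 1 := by
  rw [J_sub_N1, Matrix.add_apply, X.M_apply_eq_ite h, X.M_apply_eq_ite h]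
  rcases ht with rfl | rfl <;> simp

lemma exists_M_apply_eq_zero_and_J_sub_N1_apply_eq_one {t : Fin 5} (ht : t = 3 ∨ t = 4) :
    ∃ x y, X.M t x y = 0 ∧ (J - X.N1) x y = 1 := by
  have hs : 7 - t = 3 ∨ 7 - t = 4 := by rcases ht with rfl | rfl <;> decide
  obtain ⟨x, y, h⟩ := X.exists_M_apply_eq_one (7 - t)
  refine ⟨x, y, ?_, X.J_sub_N1_apply_of_M_apply_eq_one hs h⟩
  rw [X.M_apply_eq_ite h]
  rcases ht with rfl | rfl <;> decide

lemma c_eq_zero {j t k : Fin 5} (hj : j ≤ 2) (ht : t = 3 ∨ t = 4) (hk : k ≤ 2) :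
    X.c j t k = 0 := by
  obtain ⟨x, y, hxy⟩ := X.exists_M_apply_eq_one k
  have hN1 := X.N1_apply_eq_one_of_M_apply_eq_one hk hxy
  have h := X.mul_M_apply hxy j t
  rw [mul_apply, Finset.sum_eq_zero fun z _ => ?_] at h
  · exact_mod_cast h.symm
  rcases X.M_entries j x z with hxz | hxz
  · rw [hxz, zero_mul]
  · rw [X.M_apply_eq_zero_of_N1_apply_eq_one ht (by
      rwa [X.N1_apply_eq_of_N1_apply_eq_one (X.N1_apply_eq_one_of_M_apply_eq_one hj hxz)]),
      mul_zero]

lemma exists_mul_M_eq {E : Matrix V V ℤ} (hE : E = X.N0 ∨ E = X.N1) {t : Fin 5}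
    (ht : t = 3 ∨ t = 4) : ∃ δ d : ℤ, E * X.M t = δ • X.M t + d • (J - X.N1) := by
  obtain ⟨s, hs, rfl⟩ :
      ∃ s : Finset (Fin 5), (∀ j ∈ s, j ≤ 2) ∧ E = ∑ j ∈ s, X.M j := by
    rcases hE with rfl | rfl
    exacts [⟨_, by decide, X.N0_eq_sum⟩, ⟨_, by decide, X.N1_eq_sum⟩]
  set f : Fin 5 → ℤ := fun k => ∑ j ∈ s, (X.c j t k : ℤ)
  have hf : ∀ k ≤ 2, f k = 0 := fun k hk =>
    Finset.sum_eq_zero fun j hj => by rw [X.c_eq_zero (hs j hj) ht hk, Nat.cast_zero]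
  have hmul : (∑ j ∈ s, X.M j) * X.M t = ∑ k, f k • X.M k := by
    simp only [Finset.sum_mul, X.mul_M, f, Finset.sum_smul]
    exact Finset.sum_comm
  rw [hmul, Fin.sum_univ_five, hf 0 (by decide), hf 1 (by decide), hf 2 (by decide), J_sub_N1]
  rcases ht with rfl | rfl
  · exact ⟨f 3 - f 4, f 4, by module⟩
  · exact ⟨f 4 - f 3, f 3, by module⟩

lemma smul_mul_M_eq {E : Matrix V V ℤ} {e : ℤ} (hEE : E * E = e • E)
    (hEJ : E * J = e • J) (hEN1 : E * X.N1 = e • X.N1) {t : Fin 5} (ht : t = 3 ∨ t = 4)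
    (hEM : ∃ δ d : ℤ, E * X.M t = δ • X.M t + d • (J - X.N1))
    (hrad : E * X.M t ≠ e • X.M t) :
    (X.n 3 + X.n 4 : ℤ) • (E * X.M t) = (e * X.n t) • (J - X.N1) := by
  obtain ⟨δ, d, hEM⟩ := hEM
  have hER : E * (J - X.N1) = e • (J - X.N1) := by rw [mul_sub, hEJ, hEN1, smul_sub]
  have hidem : (δ * δ - e * δ + δ * d) • X.M t + (δ * d) • (J - X.N1 - X.M t) = 0 := by
    have h : E * (E * X.M t) = (E * E) * X.M t := (mul_assoc _ _ _).symm
    rw [hEE, smul_mul_assoc, hEM, mul_add, mul_smul_comm, mul_smul_comm, hEM, hER] at h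
    linear_combination (norm := module) h
  have hδ : δ = 0 := by
    obtain ⟨x, y, hxy⟩ := X.exists_M_apply_eq_one t
    obtain ⟨x', y', hxy0, hR⟩ := X.exists_M_apply_eq_zero_and_J_sub_N1_apply_eq_one ht
    have h1 := congrArg (· x y) hidem
    have h2 := congrArg (· x' y') hidem
    simp only [Matrix.add_apply, Matrix.sub_apply, Matrix.smul_apply, smul_eq_mul, hxy, hxy0, hR,
      X.J_sub_N1_apply_of_M_apply_eq_one ht hxy, Matrix.zero_apply] at h1 h2
    by_contra hδ
    have hd : d = 0 := by
      simpa [hδ] using h2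
    have : δ = e := by
      subst hd
      have : δ * (δ - e) = 0 := by linarith
      exact sub_eq_zero.1 ((mul_eq_zero.1 this).resolve_left hδ)
    exact hrad (by rw [hEM, hd, this, zero_smul, add_zero])
  rw [hδ, zero_smul, zero_add] at hEM
  have hrow : (X.n t * e) • J = (d * (X.n 3 + X.n 4)) • J := calc
    (X.n t * e) • J = E * X.M t * J := by
        rw [mul_assoc, X.M_mul_J, mul_smul_comm, hEJ, smul_smul]
    _ = _ := by rw [hEM, smul_mul_assoc, X.J_sub_N1_mul_J, smul_smul]
  obtain ⟨x⟩ := X.nonempty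
  have hd : X.n t * e = d * (X.n 3 + X.n 4) := by simpa using congrArg (· x x) hrow
  rw [hEM, smul_smul]
  congr 1
  linear_combination -hd

lemma smul_N0_mul_M {t : Fin 5} (ht : t = 3 ∨ t = 4) :
    (X.n 3 + X.n 4 : ℤ) • (X.N0 * X.M t) = ((1 + X.n 1) * X.n t : ℤ) • (J - X.N1) :=
  X.smul_mul_M_eq X.N0_mul_self X.N0_mul_J X.N0_mul_N1 ht
    (X.exists_mul_M_eq (.inl rfl) ht) (X.N0_mul_M_ne ht)

lemma smul_N1_mul_M {t : Fin 5} (ht : t = 3 ∨ t = 4) :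
    (X.n 3 + X.n 4 : ℤ) • (X.N1 * X.M t) = ((1 + X.n 1 + X.n 2) * X.n t : ℤ) • (J - X.N1) :=
  X.smul_mul_M_eq X.N1_mul_self X.N1_mul_J (by rw [N1_mul_self]) ht
    (X.exists_mul_M_eq (.inr rfl) ht) (X.N1_mul_M_ne ht)

lemma smul_M2_mul_M {t : Fin 5} (ht : t = 3 ∨ t = 4) :
    (X.n 3 + X.n 4 : ℤ) • (X.M 2 * X.M t) = (X.n 2 * X.n t : ℤ) • (J - X.N1) := by
  have hM2 : X.M 2 = X.N1 - X.N0 := by rw [N1, N0]; abel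
  rw [hM2, sub_mul, smul_sub, X.smul_N1_mul_M ht, X.smul_N0_mul_M ht, ← sub_smul]
  congr 1
  ring

lemma c_two_three_mul_eq {t : Fin 5} (ht : t = 3 ∨ t = 4) :
    (X.c 2 t 3 : ℤ) * (X.n 3 + X.n 4) = X.n 2 * X.n t := by
  obtain ⟨x, y, hxy⟩ := X.exists_M_apply_eq_one 3
  have h := congrArg (· x y) (X.smul_M2_mul_M ht)
  simp only [Matrix.smul_apply, smul_eq_mul, X.mul_M_apply hxy,
    X.J_sub_N1_apply_of_M_apply_eq_one (.inl rfl) hxy] at h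
  linear_combination h

lemma M2_mul_M {t : Fin 5} (ht : t = 3 ∨ t = 4) :
    X.M 2 * X.M t = (X.c 2 t 3 : ℤ) • (J - X.N1) := by
  refine smul_right_injective (Matrix V V ℤ) X.n_three_add_n_four_pos.ne' ?_
  simp only [X.smul_M2_mul_M ht, smul_smul, ← X.c_two_three_mul_eq ht, mul_comm]

lemma M_mul_self {t : Fin 5} (hγ : X.c t t 3 = X.c t t 4) :
    X.M t * X.M t = (X.n t : ℤ) • 1 + (X.c t t 1 : ℤ) • (X.N0 - 1)
      + (X.c t t 2 : ℤ) • (X.N1 - X.N0) + (X.c t t 3 : ℤ) • (J - X.N1) := by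
  rw [X.mul_M, Fin.sum_univ_five, J_sub_N1, N0, N1, ← X.M_zero, ← hγ]
  simp only [HigmanianConfig.n]
  module

lemma sq_smul_N0_mul_M_mul_self {t : Fin 5} (ht : t = 3 ∨ t = 4) :
    (X.n 3 + X.n 4 : ℤ) ^ 2 • (X.N0 * (X.M t * X.M t)) = ((1 + X.n 1) * X.n t ^ 2 : ℤ) •
      ((X.n 3 + X.n 4 : ℤ) • J - (1 + X.n 1 + X.n 2 : ℤ) • (J - X.N1)) := by
  set S : ℤ := X.n 3 + X.n 4
  calc _ = S • ((S • (X.N0 * X.M t)) * X.M t) := by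
        rw [smul_mul_assoc, smul_smul, mul_assoc, sq]
    _ = ((1 + X.n 1) * X.n t : ℤ) • (S • (X.n t : ℤ) • J - S • (X.N1 * X.M t)) := by
        rw [X.smul_N0_mul_M ht, smul_mul_assoc, sub_mul, X.J_mul_M, smul_comm, smul_sub]
    _ = _ := by
        rw [X.smul_N1_mul_M ht]
        module

lemma M_mul_self_coeffs {t : Fin 5} (ht : t = 3 ∨ t = 4) (hγ : X.c t t 3 = X.c t t 4) :
    (X.n 3 + X.n 4 : ℤ) * (X.n t + X.n 1 * X.c t t 1) = (1 + X.n 1) * X.n t ^ 2 ∧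
    (X.n 3 + X.n 4 : ℤ) * X.c t t 2 = X.n t ^ 2 ∧
    (X.n 3 + X.n 4 : ℤ) ^ 2 * X.c t t 3 = X.n t ^ 2 * (X.n 3 + X.n 4 - (1 + X.n 1 + X.n 2)) := by
  have key := X.sq_smul_N0_mul_M_mul_self ht
  rw [X.M_mul_self hγ] at key
  simp only [mul_add, mul_sub, mul_smul_comm, X.N0_mul_self, X.N0_mul_N1, X.N0_mul_J,
    mul_one] at key
  obtain ⟨x1, y1, h1⟩ := X.exists_M_apply_eq_one 1
  obtain ⟨x2, y2, h2⟩ := X.exists_M_apply_eq_one 2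
  obtain ⟨x3, y3, h3⟩ := X.exists_M_apply_eq_one 3
  have e1 := congrArg (· x1 y1) key
  have e2 := congrArg (· x2 y2) key
  have e3 := congrArg (· x3 y3) key
  simp only [N0, N1, Matrix.add_apply, Matrix.sub_apply, Matrix.smul_apply, smul_eq_mul, of_apply,
    X.M_apply_eq_ite h1, X.M_apply_eq_ite h2, X.M_apply_eq_ite h3] at e1 e2 e3
  norm_num [Fin.ext_iff] at e1 e2 e3
  have hS := X.n_three_add_n_four_pos
  have ha : (0 : ℤ) < 1 + X.n 1 := by positivity
  refine ⟨mul_left_cancel₀ hS.ne' ?_, mul_left_cancel₀ (mul_pos hS ha).ne' ?_,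
    mul_left_cancel₀ ha.ne' ?_⟩
  · linear_combination e1
  · linear_combination e2
  · linear_combination e3

lemma smul_M_mul_J_sub_N1 {t : Fin 5} (ht : t = 3 ∨ t = 4) :
    (X.n 3 + X.n 4 : ℤ) • (X.M t * (J - X.N1))
      = ((X.n 3 + X.n 4) * X.n t : ℤ) • J
        - ((1 + X.n 1 + X.n 2) * X.n t : ℤ) • (J - X.N1) := by
  have hcomm : X.M t * X.N1 = X.N1 * X.M t := by
    rw [N1, add_mul, add_mul, mul_add, mul_add, X.M_mul_comm t 0, X.M_mul_comm t 1,
      X.M_mul_comm t 2]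
  rw [mul_sub, X.M_mul_J, hcomm, smul_sub, X.smul_N1_mul_M ht, smul_smul]

lemma c_four_four_three_sub_eq : (X.c 4 4 3 : ℤ) - X.c 4 4 4 = X.c 3 3 3 - X.c 3 3 4 := by
  have hsq : X.M 3 * X.M 3 - X.M 4 * X.M 4 = X.M 3 * (J - X.N1) - X.M 4 * (J - X.N1) := by
    rw [J_sub_N1, mul_add, mul_add, X.M_mul_comm 4 3]; abel
  have h := congrArg ((X.n 3 + X.n 4 : ℤ) • ·) hsq
  rw [smul_sub, smul_sub, X.smul_M_mul_J_sub_N1 (.inl rfl),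
    X.smul_M_mul_J_sub_N1 (.inr rfl)] at h
  obtain ⟨x3, y3, h3⟩ := X.exists_M_apply_eq_one 3
  obtain ⟨x4, y4, h4⟩ := X.exists_M_apply_eq_one 4
  have e3 := congrArg (· x3 y3) h
  have e4 := congrArg (· x4 y4) h
  simp only [Matrix.sub_apply, Matrix.smul_apply, smul_eq_mul, of_apply, X.mul_M_apply h3,
    X.mul_M_apply h4, X.J_sub_N1_apply_of_M_apply_eq_one (.inl rfl) h3,
    X.J_sub_N1_apply_of_M_apply_eq_one (.inr rfl) h4] at e3 e4
  exact mul_left_cancel₀ X.n_three_add_n_four_pos.ne' (by linear_combination e4 - e3)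

lemma two_mul_c_two_three_add_eq {t s : Fin 5} (hts : (t = 3 ∧ s = 4) ∨ (t = 4 ∧ s = 3))
    (hγ : X.c t t 3 = X.c t t 4)
    (heq : (X.n 2 : ℤ) * X.n s = (1 + X.n 1) * (X.n s + 2 * X.n t)) :
    2 * X.c 2 t 3 + X.c t t 3 = (X.n 2 - (1 + X.n 1) + X.c t t 2 : ℤ) := by
  have ht : t = 3 ∨ t = 4 := by tauto
  obtain ⟨-, hβ, hγS⟩ := X.M_mul_self_coeffs ht hγ
  have hδ := X.c_two_three_mul_eq ht
  have hS : (X.n 3 + X.n 4 : ℤ) = X.n t + X.n s := by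
    rcases hts with ⟨rfl, rfl⟩ | ⟨rfl, rfl⟩ <;> ring
  refine mul_left_cancel₀ (pow_pos X.n_three_add_n_four_pos 2).ne' ?_
  -- times `S²` the two sides differ by `ns (n2 ns - a (ns + 2 nt))`, once `S = nt + ns`
  linear_combination 2 * (X.n 3 + X.n 4 : ℤ) * hδ + hγS - (X.n 3 + X.n 4 : ℤ) * hβ
    - X.n s * heq
    - (X.n 2 * (X.n 3 + X.n 4 - X.n t + X.n s) - (1 + X.n 1) * (X.n 3 + X.n 4 + X.n t + X.n s))
      * hS

lemma M2_add_M_mul_self {t s : Fin 5} (hts : (t = 3 ∧ s = 4) ∨ (t = 4 ∧ s = 3))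
    (hγ : X.c t t 3 = X.c t t 4)
    (heq : (X.n 2 : ℤ) * X.n s = (1 + X.n 1) * (X.n s + 2 * X.n t)) :
    (X.M 2 + X.M t) * (X.M 2 + X.M t) = (X.n 2 + X.n t : ℤ) • 1
      + (X.n 2 + X.c t t 1 : ℤ) • (X.N0 - 1)
      + (2 * X.c 2 t 3 + X.c t t 3 : ℤ) • (J - X.N0) := by
  have ht : t = 3 ∨ t = 4 := by tauto
  have hM2 : X.M 2 * X.M 2 = X.N1 * X.N1 - X.N1 * X.N0 - (X.N0 * X.N1 - X.N0 * X.N0) := by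
    rw [show X.M 2 = X.N1 - X.N0 by rw [N1, N0]; abel, sub_mul, mul_sub, mul_sub]
  rw [add_mul, mul_add, mul_add, X.M_mul_comm t 2, hM2, X.M2_mul_M ht, X.M_mul_self hγ,
    X.N1_mul_self, X.N1_mul_N0, X.N0_mul_N1, X.N0_mul_self]
  linear_combination (norm := module) X.two_mul_c_two_three_add_eq hts hγ heq • (X.N0 - X.N1)

lemma M_add_M_apply_eq_zero_or_one {i j : Fin 5} (hij : i ≠ j) (x y : V) :
    (X.M i + X.M j) x y = 0 ∨ (X.M i + X.M j) x y = 1 := by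
  simpa [Finset.sum_pair hij] using X.sum_M_apply_eq_zero_or_one {i, j} x y

lemma M_apply_self {k : Fin 5} (hk : k ≠ 0) (x : V) : X.M k x x = 0 := by
  rw [X.M_apply_eq_ite (k := 0) (by simp [X.M_zero]) k, if_neg hk]

lemma N0_apply_self (x : V) : X.N0 x x = 1 := by
  rw [N0, Matrix.add_apply, X.M_apply_self one_ne_zero, X.M_zero, one_apply_eq, add_zero]

lemma one_add_n_one_dvd_card : 1 + X.n 1 ∣ Fintype.card V := by
  have htrace : X.N0.trace = Fintype.card V := by
    simp [trace, X.N0_apply_self]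
  have h := dvd_trace_of_mul_self_eq_smul (by positivity) X.N0_mul_self
  rw [htrace] at h
  exact_mod_cast h

lemma cast_n_two_add_c_one_eq {t s : Fin 5} (hts : (t = 3 ∧ s = 4) ∨ (t = 4 ∧ s = 3))
    (hγ : X.c t t 3 = X.c t t 4) :
    ((X.n 2 + X.c t t 1 : ℕ) : ℚ)
      = X.n 2 + X.n t * (X.n 1 * X.n t - X.n s) / (X.n 1 * (X.n 3 + X.n 4)) := by
  have hS : (X.n 3 + X.n 4 : ℚ) = X.n t + X.n s := by
    rcases hts with ⟨rfl, rfl⟩ | ⟨rfl, rfl⟩ <;> ring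
  have hα : ((X.n 3 + X.n 4) * (X.n t + X.n 1 * X.c t t 1) : ℚ) = (1 + X.n 1) * X.n t ^ 2 := by
    exact_mod_cast (X.M_mul_self_coeffs (by tauto) hγ).1
  have : (X.n 1 : ℚ) ≠ 0 := by have := X.n_pos 1; positivity
  have : (X.n 3 + X.n 4 : ℚ) ≠ 0 := by have := X.n_pos 3; positivity
  field_simp
  push_cast
  linear_combination hα - X.n t * hS

lemma cast_two_mul_c_two_three_add_eq {t s : Fin 5} (hts : (t = 3 ∧ s = 4) ∨ (t = 4 ∧ s = 3))
    (hγ : X.c t t 3 = X.c t t 4)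
    (heq : (X.n 2 : ℤ) * X.n s = (1 + X.n 1) * (X.n s + 2 * X.n t)) :
    ((2 * X.c 2 t 3 + X.c t t 3 : ℕ) : ℚ)
      = X.n 2 - X.n 1 - 1 + X.n t ^ 2 / (X.n 3 + X.n 4) := by
  have hl2 : (2 * X.c 2 t 3 + X.c t t 3 : ℚ) = X.n 2 - (1 + X.n 1) + X.c t t 2 := by
    exact_mod_cast X.two_mul_c_two_three_add_eq hts hγ heq
  have hβ : ((X.n 3 + X.n 4) * X.c t t 2 : ℚ) = X.n t ^ 2 := by
    exact_mod_cast (X.M_mul_self_coeffs (by tauto) hγ).2.1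
  have : (X.n 3 + X.n 4 : ℚ) ≠ 0 := by have := X.n_pos 3; positivity
  push_cast
  rw [hl2, ← hβ]
  field_simp
  ring

lemma exists_mul_one_add_n_one_eq_card : ∃ m : ℕ,
    (m : ℚ) = 1 + (X.n 2 + X.n 3 + X.n 4 : ℚ) / (1 + X.n 1) ∧
      m * (1 + X.n 1) = Fintype.card V := by
  obtain ⟨m, hm⟩ := X.one_add_n_one_dvd_card
  refine ⟨m, ?_, by rw [hm, mul_comm]⟩
  have h : ((1 + X.n 1) * m : ℚ) = 1 + X.n 1 + X.n 2 + X.n 3 + X.n 4 := by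
    exact_mod_cast hm.symm.trans X.card_eq
  field_simp
  linear_combination h

end HigmanianConfig

/-- under `c(3,3,3) = c(3,3,4)` and Eq. (2) for a fixed `i ∈ {3,4}`, the matrix
`M2 + Mi` is the adjacency matrix of a divisible design graph with class matrix
`N0 = M0 + M1` and the stated parameters. -/
theorem higmanian_fusion_ddg_eq2 {V : Type*} [Fintype V] [DecidableEq V]
    (X : HigmanianConfig V) (i j : Fin 5)
    (hij : (i = 3 ∧ j = 4) ∨ (i = 4 ∧ j = 3))
    (hc : X.c 3 3 3 = X.c 3 3 4)
    (heq : (X.n 2 : ℚ) / ((X.n 1 : ℚ) + 1) - 2 * (X.n i : ℚ) / (X.n j : ℚ) = 1) :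
    ∃ l1 l2 m : ℕ,
      (l1 : ℚ) = (X.n 2 : ℚ)
          + (X.n i : ℚ) * ((X.n 1 : ℚ) * (X.n i : ℚ) - (X.n j : ℚ))
            / ((X.n 1 : ℚ) * ((X.n 3 : ℚ) + (X.n 4 : ℚ))) ∧
      (l2 : ℚ) = (X.n 2 : ℚ) - (X.n 1 : ℚ) - 1
          + (X.n i : ℚ) ^ 2 / ((X.n 3 : ℚ) + (X.n 4 : ℚ)) ∧
      (m : ℚ) = 1 + ((X.n 2 : ℚ) + (X.n 3 : ℚ) + (X.n 4 : ℚ)) / (1 + (X.n 1 : ℚ)) ∧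
      Fintype.card V = 1 + X.n 1 + X.n 2 + X.n 3 + X.n 4 ∧
      m * (1 + X.n 1) = Fintype.card V ∧
      (X.M 2 + X.M i)ᵀ = X.M 2 + X.M i ∧
      (∀ x y, (X.M 2 + X.M i) x y = 0 ∨ (X.M 2 + X.M i) x y = 1) ∧
      (∀ x, (X.M 2 + X.M i) x x = 0) ∧
      (X.M 0 + X.M 1)ᵀ = X.M 0 + X.M 1 ∧
      (∀ x y, (X.M 0 + X.M 1) x y = 0 ∨ (X.M 0 + X.M 1) x y = 1) ∧
      (∀ x, (X.M 0 + X.M 1) x x = 1) ∧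
      (X.M 0 + X.M 1) * (X.M 0 + X.M 1)
          = ((1 + X.n 1 : ℕ) : ℤ) • (X.M 0 + X.M 1) ∧
      (X.M 2 + X.M i) * (X.M 2 + X.M i)
          = ((X.n 2 + X.n i : ℕ) : ℤ) • (1 : Matrix V V ℤ)
            + (l1 : ℤ) • ((X.M 0 + X.M 1) - 1)
            + (l2 : ℤ) • ((Matrix.of fun _ _ => (1 : ℤ)) - (X.M 0 + X.M 1)) := by
  have ht : i = 3 ∨ i = 4 := by tauto
  have hi : i ≠ 0 ∧ 2 ≠ i := by rcases ht with rfl | rfl <;> decide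
  have hγ : X.c i i 3 = X.c i i 4 := by
    rcases hij with ⟨rfl, -⟩ | ⟨rfl, -⟩
    · exact hc
    · have := X.c_four_four_three_sub_eq; omega
  have hrel : (X.n 2 : ℤ) * X.n j = (1 + X.n 1) * (X.n j + 2 * X.n i) := by
    have : (X.n j : ℚ) ≠ 0 := by have := X.n_pos j; positivity
    have hq : (X.n 2 : ℚ) * X.n j = (1 + X.n 1) * (X.n j + 2 * X.n i) := by
      field_simp at heq
      linear_combination heq
    exact_mod_cast hq
  obtain ⟨m, hmQ, hm⟩ := X.exists_mul_one_add_n_one_eq_card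
  refine ⟨X.n 2 + X.c i i 1, 2 * X.c 2 i 3 + X.c i i 3, m, X.cast_n_two_add_c_one_eq hij hγ,
    X.cast_two_mul_c_two_three_add_eq hij hγ hrel, hmQ, X.card_eq, hm,
    by rw [transpose_add, X.M_symm, X.M_symm], X.M_add_M_apply_eq_zero_or_one hi.2,
    fun x => by rw [Matrix.add_apply, X.M_apply_self (by decide), X.M_apply_self hi.1, add_zero],
    X.N0_transpose, X.M_add_M_apply_eq_zero_or_one (by decide), X.N0_apply_self, X.N0_sq, ?_⟩
  push_cast
  exact X.M2_add_M_mul_self hij hγ hrel
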